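/- arXiv:2506.20094 — 2 statements merged into one kernel-verified Lean document; each statement's English description precedes it below -/
import Mathlib

section
/- If for every hypothesis h in the hypothesis space H the loss ℓ(h, Z) is σ-sub-Gaussian when Z ∼ P, then the generalization error of a learning algorithm with output distribution P_{h|D} on an i.i.d. sample D of size n satisfies (gen(P, P_{h|D}))² ≤ (2σ²/n) · I(D; h), where I(D; h) is the mutual information between the input dataset D and the output hypothesis h. -/
open Finset

namespace MEL

variable {Ω : Type*} [Fintype Ω]

/-- Probability mass of the event `X = a` under the pmf `μ` on the finite sample space `Ω`
(the pushforward distribution of `μ` under the random variable `X`). -/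
noncomputable def probOf {α : Type*} [Fintype α] [DecidableEq α]
    (μ : Ω → ℝ) (X : Ω → α) (a : α) : ℝ :=
  ∑ ω, if X ω = a then μ ω else 0

/-- Shannon entropy `H(X)` of a discrete random variable `X` (with the `0 log 0 = 0`
convention, which holds since `Real.log 0 = 0`). -/
noncomputable def entropy {α : Type*} [Fintype α] [DecidableEq α]
    (μ : Ω → ℝ) (X : Ω → α) : ℝ :=
  -∑ a, probOf μ X a * Real.log (probOf μ X a)

/-- Conditional entropy `H(X | Y) = H(X, Y) - H(Y)`. -/
noncomputable def condEntropy {α β : Type*} [Fintype α] [DecidableEq α]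
    [Fintype β] [DecidableEq β] (μ : Ω → ℝ) (X : Ω → α) (Y : Ω → β) : ℝ :=
  entropy μ (fun ω => (X ω, Y ω)) - entropy μ Y

/-- Mutual information `I(X ; Y) = H(X) - H(X | Y)`. -/
noncomputable def mutualInfo {α β : Type*} [Fintype α] [DecidableEq α]
    [Fintype β] [DecidableEq β] (μ : Ω → ℝ) (X : Ω → α) (Y : Ω → β) : ℝ :=
  entropy μ X - condEntropy μ X Y

/-- `Y` and `Z` are conditionally independent given `X`: conditioned on any value of `X`,
the joint conditional distribution of `(Y, Z)` is the product of the conditional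
distributions of `Y` and of `Z` (stated multiplicatively to avoid division by zero). -/
def condIndep {α β γ : Type*} [Fintype α] [DecidableEq α]
    [Fintype β] [DecidableEq β] [Fintype γ] [DecidableEq γ]
    (μ : Ω → ℝ) (Y : Ω → β) (Z : Ω → γ) (X : Ω → α) : Prop :=
  ∀ (x : α) (y : β) (z : γ),
    probOf μ (fun ω => (Y ω, Z ω, X ω)) (y, z, x) * probOf μ X x =
      probOf μ (fun ω => (Y ω, X ω)) (y, x) * probOf μ (fun ω => (Z ω, X ω)) (z, x)

end MEL

open MEL

namespace MEL

/-- Population risk `L(h) = E_{Z ∼ P}[ℓ(h, Z)]` for a pmf `P` on a finite instance space. -/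
noncomputable def popRisk {𝒵 ℋ : Type*} [Fintype 𝒵]
    (P : 𝒵 → ℝ) (ℓ : ℋ → 𝒵 → ℝ) (h : ℋ) : ℝ :=
  ∑ z, P z * ℓ h z

/-- Empirical risk `L̂(h) = (1/n) ∑ᵢ ℓ(h, Zᵢ)` on a dataset `d` of `n` samples. -/
noncomputable def empRisk {𝒵 ℋ : Type*}
    (ℓ : ℋ → 𝒵 → ℝ) (n : ℕ) (h : ℋ) (d : Fin n → 𝒵) : ℝ :=
  (1 / (n : ℝ)) * ∑ i, ℓ h (d i)

end MEL

section XRAux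
variable {Ω : Type*} [Fintype Ω]

lemma probOf_nonneg' {α : Type*} [Fintype α] [DecidableEq α]
    (μ : Ω → ℝ) (hμ : ∀ ω, 0 ≤ μ ω) (X : Ω → α) (a : α) : 0 ≤ probOf μ X a :=
  Finset.sum_nonneg fun ω _ => by split <;> [exact hμ ω; exact le_rfl]

lemma sum_probOf' {α : Type*} [Fintype α] [DecidableEq α] (μ : Ω → ℝ) (X : Ω → α) :
    ∑ a, probOf μ X a = ∑ ω, μ ω := by
  unfold probOf
  rw [Finset.sum_comm]
  simp

lemma sum_probOf_mul' {α : Type*} [Fintype α] [DecidableEq α] (μ : Ω → ℝ) (X : Ω → α)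
    (F : α → ℝ) : ∑ a, probOf μ X a * F a = ∑ ω, μ ω * F (X ω) := by
  unfold probOf
  simp_rw [Finset.sum_mul]
  rw [Finset.sum_comm]
  refine Finset.sum_congr rfl fun ω _ => ?_
  rw [Finset.sum_eq_single (X ω)]
  · simp
  · intro b _ hb
    rw [if_neg (Ne.symm hb), zero_mul]
  · simp

lemma marginal_fst' {α β : Type*} [Fintype α] [DecidableEq α] [Fintype β] [DecidableEq β]
    (μ : Ω → ℝ) (X : Ω → α) (Y : Ω → β) (a : α) :
    ∑ b, probOf μ (fun ω => (X ω, Y ω)) (a, b) = probOf μ X a := by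
  unfold probOf
  rw [Finset.sum_comm]
  refine Finset.sum_congr rfl fun ω _ => ?_
  by_cases hx : X ω = a <;> simp [Prod.ext_iff, hx]

lemma marginal_snd' {α β : Type*} [Fintype α] [DecidableEq α] [Fintype β] [DecidableEq β]
    (μ : Ω → ℝ) (X : Ω → α) (Y : Ω → β) (b : β) :
    ∑ a, probOf μ (fun ω => (X ω, Y ω)) (a, b) = probOf μ Y b := by
  unfold probOf
  rw [Finset.sum_comm]
  refine Finset.sum_congr rfl fun ω _ => ?_
  by_cases hy : Y ω = b <;> simp [Prod.ext_iff, hy]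

/-- Gibbs' variational inequality on a finite index set. -/
lemma gibbs' {ι : Type*} [Fintype ι] (p a : ι → ℝ) (hp : ∀ i, 0 ≤ p i)
    (hps : ∑ i, p i = 1) (ha : ∀ i, 0 ≤ a i) (hpa : ∀ i, 0 < p i → 0 < a i)
    (hS : 0 < ∑ i, a i) :
    ∑ i, p i * (Real.log (a i) - Real.log (p i)) ≤ Real.log (∑ i, a i) := by
  set S := ∑ i, a i with hSdef
  have key : ∀ i, p i * (Real.log (a i) - Real.log (p i)) ≤
      a i / S - p i + p i * Real.log S := by
    intro i
    rcases (hp i).lt_or_eq with hpi | hpi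
    · have hai := hpa i hpi
      have ht : 0 < a i / (S * p i) := div_pos hai (mul_pos hS hpi)
      have hlog := Real.log_le_sub_one_of_pos ht
      rw [Real.log_div hai.ne' (mul_pos hS hpi).ne', Real.log_mul hS.ne' hpi.ne'] at hlog
      have h2 := mul_le_mul_of_nonneg_left hlog (hp i)
      have h3 : p i * (a i / (S * p i) - 1) = a i / S - p i := by
        field_simp
      nlinarith [h2, h3]
    · rw [← hpi]
      simp only [zero_mul, mul_zero, sub_zero, add_zero]
      exact div_nonneg (ha i) hS.le
  calc ∑ i, p i * (Real.log (a i) - Real.log (p i))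
      ≤ ∑ i, (a i / S - p i + p i * Real.log S) := Finset.sum_le_sum fun i _ => key i
    _ = S / S - 1 + Real.log S := by
        rw [Finset.sum_add_distrib, Finset.sum_sub_distrib, ← Finset.sum_div, ← hSdef,
          hps, ← Finset.sum_mul, hps, one_mul]
    _ = Real.log S := by rw [div_self hS.ne']; ring

/-- Mutual information equals relative entropy of the joint vs. product of marginals. -/
lemma mutualInfo_eq_kl' {α β : Type*} [Fintype α] [DecidableEq α] [Fintype β] [DecidableEq β]
    (μ : Ω → ℝ) (X : Ω → α) (Y : Ω → β) :
    mutualInfo μ X Y = ∑ a : α × β, probOf μ (fun ω => (X ω, Y ω)) a *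
      (Real.log (probOf μ (fun ω => (X ω, Y ω)) a) -
        Real.log (probOf μ X a.1) - Real.log (probOf μ Y a.2)) := by
  have e1 : ∑ a : α × β, probOf μ (fun ω => (X ω, Y ω)) a * Real.log (probOf μ X a.1) =
      ∑ x, probOf μ X x * Real.log (probOf μ X x) := by
    rw [Fintype.sum_prod_type]
    exact Finset.sum_congr rfl fun x _ => by dsimp only; rw [← Finset.sum_mul, marginal_fst']
  have e2 : ∑ a : α × β, probOf μ (fun ω => (X ω, Y ω)) a * Real.log (probOf μ Y a.2) =
      ∑ y, probOf μ Y y * Real.log (probOf μ Y y) := by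
    rw [Fintype.sum_prod_type_right]
    exact Finset.sum_congr rfl fun y _ => by dsimp only; rw [← Finset.sum_mul, marginal_snd']
  have e3 : ∑ a : α × β, probOf μ (fun ω => (X ω, Y ω)) a *
      (Real.log (probOf μ (fun ω => (X ω, Y ω)) a) -
        Real.log (probOf μ X a.1) - Real.log (probOf μ Y a.2)) =
      ∑ a : α × β, probOf μ (fun ω => (X ω, Y ω)) a *
          Real.log (probOf μ (fun ω => (X ω, Y ω)) a)
        - ∑ a : α × β, probOf μ (fun ω => (X ω, Y ω)) a * Real.log (probOf μ X a.1)
        - ∑ a : α × β, probOf μ (fun ω => (X ω, Y ω)) a * Real.log (probOf μ Y a.2) := by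
    rw [← Finset.sum_sub_distrib, ← Finset.sum_sub_distrib]
    exact Finset.sum_congr rfl fun a _ => by ring
  rw [e3, e1, e2]
  simp only [mutualInfo, condEntropy, entropy]
  ring

end XRAux

/-- Xu–Raginsky generalization bound (Theorem 1 of `xu2017information`): if for every
hypothesis `h'` the loss `ℓ(h', Z)` is `σ`-sub-Gaussian when `Z ∼ P`, then the
generalization error `gen(P, P_{h|D}) = E[L(h) - L̂(h)]` of a learning algorithm whose
input is an i.i.d. sample `D = (Z₁, …, Zₙ)` from `P` and whose output hypothesis is `h`
satisfies `gen² ≤ (2σ²/n) · I(D ; h)`. -/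
theorem gen_sq_le_mutualInfo
    {Ω 𝒵 ℋ : Type*} [Fintype Ω] [Fintype 𝒵] [DecidableEq 𝒵] [Fintype ℋ] [DecidableEq ℋ]
    -- the joint probability space of the sample and the algorithm's output
    (μ : Ω → ℝ) (hμ : ∀ ω, 0 ≤ μ ω) (hμsum : ∑ ω, μ ω = 1)
    -- the data-generating distribution P on the instance space
    (P : 𝒵 → ℝ) (hP : ∀ z, 0 ≤ P z) (hPsum : ∑ z, P z = 1)
    -- the nonnegative loss function
    (ℓ : ℋ → 𝒵 → ℝ) (hℓ : ∀ h' z, 0 ≤ ℓ h' z)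
    (n : ℕ) (hn : 0 < n)
    -- the dataset D and output hypothesis h, jointly distributed on Ω
    (D : Ω → (Fin n → 𝒵)) (h : Ω → ℋ)
    -- D is an i.i.d. sample of size n from P
    (hiid : ∀ d : Fin n → 𝒵, probOf μ D d = ∏ i, P (d i))
    (σ : ℝ)
    -- ℓ(h', Z) is σ-sub-Gaussian for Z ∼ P, for every hypothesis h'
    (hsub : ∀ (h' : ℋ) (lam : ℝ),
      ∑ z, P z * Real.exp (lam * (ℓ h' z - popRisk P ℓ h')) ≤
        Real.exp (lam ^ 2 * σ ^ 2 / 2)) :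
    (∑ ω, μ ω * (popRisk P ℓ (h ω) - empRisk ℓ n (h ω) (D ω))) ^ 2 ≤
      (2 * σ ^ 2 / n) * mutualInfo μ D h := by
  classical
  have hpnn := probOf_nonneg' μ hμ (fun ω => (D ω, h ω))
  have hqnn := probOf_nonneg' μ hμ D
  have hrnn := probOf_nonneg' μ hμ h
  have hpsum : ∑ a, probOf μ (fun ω => (D ω, h ω)) a = 1 := by
    rw [sum_probOf', hμsum]
  have hrsum : ∑ h', probOf μ h h' = 1 := by rw [sum_probOf', hμsum]
  have hI := mutualInfo_eq_kl' μ D h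
  have hn' : (0:ℝ) < (n:ℝ) := by exact_mod_cast hn
  set G := ∑ ω, μ ω * (popRisk P ℓ (h ω) - empRisk ℓ n (h ω) (D ω)) with hGdef
  have key : ∀ t : ℝ, t * G ≤ mutualInfo μ D h + t ^ 2 * σ ^ 2 / (2 * n) := by
    intro t
    set f : (Fin n → 𝒵) × ℋ → ℝ := fun a => popRisk P ℓ a.2 - empRisk ℓ n a.2 a.1 with hf
    set aF : (Fin n → 𝒵) × ℋ → ℝ :=
      fun a => probOf μ D a.1 * probOf μ h a.2 * Real.exp (t * f a) with haF
    obtain ⟨i0, hi0⟩ : ∃ i, 0 < probOf μ (fun ω => (D ω, h ω)) i := by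
      by_contra hcon
      push_neg at hcon
      have hz : ∑ a, probOf μ (fun ω => (D ω, h ω)) a = 0 :=
        Finset.sum_eq_zero fun a _ => le_antisymm (hcon a) (hpnn a)
      rw [hpsum] at hz
      norm_num at hz
    have hq0 : ∀ a : (Fin n → 𝒵) × ℋ, 0 < probOf μ (fun ω => (D ω, h ω)) a →
        0 < probOf μ D a.1 := by
      intro a hpa
      calc (0:ℝ) < probOf μ (fun ω => (D ω, h ω)) (a.1, a.2) := by rwa [Prod.mk.eta]
        _ ≤ ∑ h', probOf μ (fun ω => (D ω, h ω)) (a.1, h') :=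
            Finset.single_le_sum (fun h' _ => hpnn _) (Finset.mem_univ a.2)
        _ = probOf μ D a.1 := marginal_fst' μ D h a.1
    have hr0 : ∀ a : (Fin n → 𝒵) × ℋ, 0 < probOf μ (fun ω => (D ω, h ω)) a →
        0 < probOf μ h a.2 := by
      intro a hpa
      calc (0:ℝ) < probOf μ (fun ω => (D ω, h ω)) (a.1, a.2) := by rwa [Prod.mk.eta]
        _ ≤ ∑ d, probOf μ (fun ω => (D ω, h ω)) (d, a.2) :=
            Finset.single_le_sum (f := fun d => probOf μ (fun ω => (D ω, h ω)) (d, a.2))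
              (fun d _ => hpnn _) (Finset.mem_univ a.1)
        _ = probOf μ h a.2 := marginal_snd' μ D h a.2
    have haFnn : ∀ a, 0 ≤ aF a := fun a =>
      mul_nonneg (mul_nonneg (hqnn _) (hrnn _)) (Real.exp_pos _).le
    have haFpos : ∀ a, 0 < probOf μ (fun ω => (D ω, h ω)) a → 0 < aF a := fun a hpa =>
      mul_pos (mul_pos (hq0 a hpa) (hr0 a hpa)) (Real.exp_pos _)
    have hS : 0 < ∑ a, aF a :=
      lt_of_lt_of_le (haFpos i0 hi0)
        (Finset.single_le_sum (fun a _ => haFnn a) (Finset.mem_univ i0))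
    have hgibbs := gibbs' (probOf μ (fun ω => (D ω, h ω))) aF hpnn hpsum haFnn haFpos hS
    have hterm : ∀ a, probOf μ (fun ω => (D ω, h ω)) a * (Real.log (aF a) - Real.log (probOf μ (fun ω => (D ω, h ω)) a)) =
        probOf μ (fun ω => (D ω, h ω)) a * (t * f a) -
          probOf μ (fun ω => (D ω, h ω)) a *
            (Real.log (probOf μ (fun ω => (D ω, h ω)) a) -
              Real.log (probOf μ D a.1) - Real.log (probOf μ h a.2)) := by
      intro a
      rcases (hpnn a).lt_or_eq with hpa | hpa
      · have e : Real.log (aF a) =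
            Real.log (probOf μ D a.1) + Real.log (probOf μ h a.2) + t * f a := by
          rw [haF]
          dsimp only
          rw [Real.log_mul (mul_pos (hq0 a hpa) (hr0 a hpa)).ne' (Real.exp_pos _).ne',
            Real.log_mul (hq0 a hpa).ne' (hr0 a hpa).ne', Real.log_exp]
        rw [e]
        ring
      · rw [← hpa]
        ring
    rw [Finset.sum_congr rfl (fun a _ => hterm a), Finset.sum_sub_distrib] at hgibbs
    have hgen : ∑ a, probOf μ (fun ω => (D ω, h ω)) a * (t * f a) = t * G := by
      have e0 : ∑ a, probOf μ (fun ω => (D ω, h ω)) a * (t * f a) =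
          t * ∑ a, probOf μ (fun ω => (D ω, h ω)) a * f a := by
        rw [Finset.mul_sum]
        exact Finset.sum_congr rfl fun a _ => by ring
      rw [e0, sum_probOf_mul' μ (fun ω => (D ω, h ω)) f, hGdef]
    rw [hgen, ← hI] at hgibbs
    -- now bound Real.log (∑ a, aF a)
    have hlogS : Real.log (∑ a, aF a) ≤ t ^ 2 * σ ^ 2 / (2 * n) := by
      rw [Real.log_le_iff_le_exp hS]
      have hT : ∀ h' : ℋ, ∑ d, probOf μ D d * Real.exp (t * f (d, h')) ≤
          Real.exp (t ^ 2 * σ ^ 2 / (2 * n)) := by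
        intro h'
        set c : 𝒵 → ℝ := fun z =>
          P z * Real.exp ((t / n) * (popRisk P ℓ h' - ℓ h' z)) with hc
        have hcnn : ∀ z, 0 ≤ c z := fun z => mul_nonneg (hP z) (Real.exp_pos _).le
        have hstep : ∀ d : Fin n → 𝒵,
            probOf μ D d * Real.exp (t * f (d, h')) = ∏ i, c (d i) := by
          intro d
          have hexp : t * f (d, h') =
              ∑ i : Fin n, (t / n) * (popRisk P ℓ h' - ℓ h' (d i)) := by
            simp only [hf, empRisk]
            rw [← Finset.mul_sum, Finset.sum_sub_distrib, Finset.sum_const,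
              Finset.card_univ, Fintype.card_fin, nsmul_eq_mul]
            field_simp
            try ring
            try tauto
          rw [hexp, Real.exp_sum, hiid d, ← Finset.prod_mul_distrib]
        have hcle : ∑ z, c z ≤ Real.exp ((t / n) ^ 2 * σ ^ 2 / 2) := by
          have hs := hsub h' (-(t / n))
          have e1 : ∀ z, P z * Real.exp (-(t / n) * (ℓ h' z - popRisk P ℓ h')) = c z := by
            intro z
            rw [hc]
            dsimp only
            congr 2
            ring
          rw [Finset.sum_congr rfl (fun z _ => e1 z)] at hs
          have e2 : (-(t / n)) ^ 2 * σ ^ 2 / 2 = (t / n) ^ 2 * σ ^ 2 / 2 := by ring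
          rwa [e2] at hs
        calc ∑ d, probOf μ D d * Real.exp (t * f (d, h'))
            = ∑ d : Fin n → 𝒵, ∏ i, c (d i) :=
              Finset.sum_congr rfl fun d _ => hstep d
          _ = (∑ z, c z) ^ n := (Fintype.sum_pow c n).symm
          _ ≤ Real.exp ((t / n) ^ 2 * σ ^ 2 / 2) ^ n :=
              pow_le_pow_left₀ (Finset.sum_nonneg fun z _ => hcnn z) hcle n
          _ = Real.exp (t ^ 2 * σ ^ 2 / (2 * n)) := by
              rw [← Real.exp_nat_mul]
              congr 1
              field_simp
      calc ∑ a, aF a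
          = ∑ h', probOf μ h h' * ∑ d, probOf μ D d * Real.exp (t * f (d, h')) := by
            rw [Fintype.sum_prod_type_right]
            refine Finset.sum_congr rfl fun h' _ => ?_
            rw [Finset.mul_sum]
            exact Finset.sum_congr rfl fun d _ => by rw [haF]; dsimp only; ring
        _ ≤ ∑ h', probOf μ h h' * Real.exp (t ^ 2 * σ ^ 2 / (2 * n)) :=
            Finset.sum_le_sum fun h' _ => mul_le_mul_of_nonneg_left (hT h') (hrnn h')
        _ = Real.exp (t ^ 2 * σ ^ 2 / (2 * n)) := by
            rw [← Finset.sum_mul, hrsum, one_mul]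
    linarith [hgibbs, hlogS]
  -- conclude by optimizing over t
  rcases eq_or_ne σ 0 with hσ | hσ
  · have hG0 : G = 0 := by
      by_contra hG0
      have h1 := key ((|mutualInfo μ D h| + 1) / G)
      rw [div_mul_cancel₀ _ hG0, hσ] at h1
      have h2 : ((|mutualInfo μ D h| + 1) / G) ^ 2 * (0:ℝ) ^ 2 / (2 * n) = 0 := by ring
      rw [h2] at h1
      have h3 := le_abs_self (mutualInfo μ D h)
      linarith
    rw [hG0, hσ]
    norm_num
  · have hσ2 : (0:ℝ) < σ ^ 2 := by positivity
    have hk := key (G * n / σ ^ 2)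
    have e1 : G * n / σ ^ 2 * G = G ^ 2 * n / σ ^ 2 := by ring
    have e2 : (G * n / σ ^ 2) ^ 2 * σ ^ 2 / (2 * n) = G ^ 2 * n / (2 * σ ^ 2) := by
      field_simp
    rw [e1, e2] at hk
    have e3 : G ^ 2 * n / σ ^ 2 = 2 * (G ^ 2 * n / (2 * σ ^ 2)) := by ring
    rw [e3] at hk
    have h4 : G ^ 2 * n / (2 * σ ^ 2) ≤ mutualInfo μ D h := by linarith
    have e5 : G ^ 2 = (2 * σ ^ 2 / n) * (G ^ 2 * n / (2 * σ ^ 2)) := by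
      field_simp
    rw [e5]
    exact mul_le_mul_of_nonneg_left h4 (by positivity)
end

section
/- Let D be a dataset of n i.i.d. samples from P, and let h₁, h₂, h₁₂ be hypotheses produced along the Markov chain D → (h₁, h₂) → h₁₂ with h₁ and h₂ conditionally independent given D. Fix 0 ≤ p ≤ 1 and define the overall generalization error gen²_overall = E[ ((1−p)/(1+p))·(L(h₁₂) − L̂(h₁₂))² + (p/(1+p))·(L(h₁) − L̂(h₁))² + (p/(1+p))·(L(h₂) − L̂(h₂))² ], where the expectation is over D, h₁, h₂, h₁₂. If the loss ℓ(h, Z) is σ-sub-Gaussian for all hypotheses h when Z ∼ P, so that each model h ∈ {h₁, h₂, h₁₂} satisfies E[(L(h) − L̂(h))²] ≤ (2σ²/n)·I(D; h), then gen²_overall ≤ (1/(1+p))·(2σ²/n)·( I(D; h₁) + I(D; h₂) − (1−p)·I(h₁; h₂) ). -/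
open Finset

open MEL

section Aux
open Finset

lemma gibbs {ι : Type*} [Fintype ι] (q r : ι → ℝ) (hq : ∀ i, 0 ≤ q i) (hr : ∀ i, 0 ≤ r i)
    (hdom : ∀ i, r i = 0 → q i = 0) (hsum : ∑ i, r i ≤ ∑ i, q i) :
    ∑ i, q i * Real.log (r i) ≤ ∑ i, q i * Real.log (q i) := by
  have key : ∀ i, q i * Real.log (r i) - q i * Real.log (q i) ≤ r i - q i := by
    intro i
    rcases eq_or_lt_of_le (hq i) with h0 | h0
    · have : q i = 0 := h0.symm
      simp [this]; exact hr i
    · have hri : 0 < r i := by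
        rcases eq_or_lt_of_le (hr i) with h1 | h1
        · exact absurd (hdom i h1.symm) (ne_of_gt h0)
        · exact h1
      have hlog : Real.log (r i / q i) ≤ r i / q i - 1 :=
        Real.log_le_sub_one_of_pos (div_pos hri h0)
      have : q i * Real.log (r i / q i) ≤ q i * (r i / q i - 1) :=
        mul_le_mul_of_nonneg_left hlog (le_of_lt h0)
      rw [Real.log_div (ne_of_gt hri) (ne_of_gt h0)] at this
      calc q i * Real.log (r i) - q i * Real.log (q i)
          = q i * (Real.log (r i) - Real.log (q i)) := by ring
        _ ≤ q i * (r i / q i - 1) := this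
        _ = r i - q i := by field_simp
  have h2 : ∑ i, (q i * Real.log (r i) - q i * Real.log (q i)) ≤ ∑ i, (r i - q i) :=
    Finset.sum_le_sum (fun i _ => key i)
  simp only [Finset.sum_sub_distrib] at h2
  linarith

variable {α β γ : Type*} [Fintype α] [Fintype β] [Fintype γ]

lemma cross (q : β → γ → α → ℝ) (f : β → α → ℝ) (g : γ → α → ℝ) (c : α → ℝ) :
    ∑ y, ∑ z, ∑ x, q y z x * (f y x + g z x - c x)
    = ∑ y, ∑ x, (∑ z, q y z x) * f y x
      + ∑ z, ∑ x, (∑ y, q y z x) * g z x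
      - ∑ x, (∑ y, ∑ z, q y z x) * c x := by
  simp only [mul_add, mul_sub, Finset.sum_add_distrib, Finset.sum_sub_distrib]
  congr 1
  · congr 1
    · -- ∑ y ∑ z ∑ x, q * f y x = ∑ y ∑ x (∑ z q) * f
      refine Finset.sum_congr rfl fun y _ => ?_
      rw [Finset.sum_comm]
      exact Finset.sum_congr rfl fun x _ => (Finset.sum_mul _ _ _).symm
    · -- ∑ y ∑ z ∑ x, q * g z x = ∑ z ∑ x (∑ y q) * g
      rw [Finset.sum_comm]
      refine Finset.sum_congr rfl fun z _ => ?_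
      rw [Finset.sum_comm]
      exact Finset.sum_congr rfl fun x _ => (Finset.sum_mul _ _ _).symm
  · calc ∑ y, ∑ z, ∑ x, q y z x * c x
        = ∑ y, ∑ x, ∑ z, q y z x * c x :=
          Finset.sum_congr rfl fun y _ => Finset.sum_comm
      _ = ∑ x, ∑ y, ∑ z, q y z x * c x := Finset.sum_comm
      _ = ∑ x, (∑ y, ∑ z, q y z x) * c x := by
          refine Finset.sum_congr rfl fun x _ => ?_
          rw [Finset.sum_mul]
          exact Finset.sum_congr rfl fun y _ => (Finset.sum_mul _ _ _).symm

section Abstract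
variable (q : β → γ → α → ℝ)

lemma ci_abstract (hq : ∀ y z x, 0 ≤ q y z x)
    (hci : ∀ y z x, q y z x * (∑ y', ∑ z', q y' z' x) =
      (∑ z', q y z' x) * (∑ y', q y' z x)) :
    ∑ y, ∑ z, ∑ x, q y z x * Real.log (q y z x)
      + ∑ x, (∑ y, ∑ z, q y z x) * Real.log (∑ y, ∑ z, q y z x)
    = ∑ y, ∑ x, (∑ z, q y z x) * Real.log (∑ z, q y z x)
      + ∑ z, ∑ x, (∑ y, q y z x) * Real.log (∑ y, q y z x) := by
  have hA : ∀ y z x, q y z x ≤ ∑ z', q y z' x := fun y z x =>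
    Finset.single_le_sum (fun i _ => hq y i x) (mem_univ z)
  have hB : ∀ y z x, q y z x ≤ ∑ y', q y' z x := fun y z x =>
    Finset.single_le_sum (fun i _ => hq i z x) (mem_univ y)
  have hAC : ∀ y x, (∑ z, q y z x) ≤ ∑ y', ∑ z', q y' z' x := fun y x =>
    Finset.single_le_sum (fun i _ => Finset.sum_nonneg fun z _ => hq i z x) (mem_univ y)
  have key : ∀ y z x, q y z x * Real.log (q y z x)
      = q y z x * (Real.log (∑ z', q y z' x) + Real.log (∑ y', q y' z x)
          - Real.log (∑ y', ∑ z', q y' z' x)) := by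
    intro y z x
    rcases eq_or_lt_of_le (hq y z x) with h0 | h0
    · rw [← h0]; ring
    · have hApos : 0 < ∑ z', q y z' x := lt_of_lt_of_le h0 (hA y z x)
      have hBpos : 0 < ∑ y', q y' z x := lt_of_lt_of_le h0 (hB y z x)
      have hCpos : 0 < ∑ y', ∑ z', q y' z' x := lt_of_lt_of_le hApos (hAC y x)
      have hqval : q y z x = (∑ z', q y z' x) * (∑ y', q y' z x) / (∑ y', ∑ z', q y' z' x) := by
        field_simp
        linarith [hci y z x]
      rw [hqval, Real.log_div (by positivity) (ne_of_gt hCpos),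
        Real.log_mul (ne_of_gt hApos) (ne_of_gt hBpos)]
  calc ∑ y, ∑ z, ∑ x, q y z x * Real.log (q y z x)
        + ∑ x, (∑ y, ∑ z, q y z x) * Real.log (∑ y, ∑ z, q y z x)
      = ∑ y, ∑ z, ∑ x, q y z x * (Real.log (∑ z', q y z' x) + Real.log (∑ y', q y' z x)
          - Real.log (∑ y', ∑ z', q y' z' x))
        + ∑ x, (∑ y, ∑ z, q y z x) * Real.log (∑ y, ∑ z, q y z x) := by
        congr 1
        exact Finset.sum_congr rfl fun y _ => Finset.sum_congr rfl fun z _ =>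
          Finset.sum_congr rfl fun x _ => key y z x
    _ = _ := by
        rw [cross q (fun y x => Real.log (∑ z', q y z' x))
          (fun z x => Real.log (∑ y', q y' z x)) (fun x => Real.log (∑ y', ∑ z', q y' z' x))]
        ring

lemma ssa_abstract (hq : ∀ y z x, 0 ≤ q y z x) :
    ∑ y, ∑ x, (∑ z, q y z x) * Real.log (∑ z, q y z x)
      + ∑ z, ∑ x, (∑ y, q y z x) * Real.log (∑ y, q y z x)
    ≤ ∑ y, ∑ z, ∑ x, q y z x * Real.log (q y z x)
      + ∑ x, (∑ y, ∑ z, q y z x) * Real.log (∑ y, ∑ z, q y z x) := by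
  have hA : ∀ y z x, q y z x ≤ ∑ z', q y z' x := fun y z x =>
    Finset.single_le_sum (fun i _ => hq y i x) (mem_univ z)
  have hB : ∀ y z x, q y z x ≤ ∑ y', q y' z x := fun y z x =>
    Finset.single_le_sum (fun i _ => hq i z x) (mem_univ y)
  have hAC : ∀ y x, (∑ z, q y z x) ≤ ∑ y', ∑ z', q y' z' x := fun y x =>
    Finset.single_le_sum (fun i _ => Finset.sum_nonneg fun z _ => hq i z x) (mem_univ y)
  have hCnn : ∀ x, 0 ≤ ∑ y', ∑ z', q y' z' x := fun x =>
    Finset.sum_nonneg fun y _ => Finset.sum_nonneg fun z _ => hq y z x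
  set R : β × γ × α → ℝ := fun s =>
    if (∑ y', ∑ z', q y' z' s.2.2) = 0 then 0
    else (∑ z', q s.1 z' s.2.2) * (∑ y', q y' s.2.1 s.2.2) / (∑ y', ∑ z', q y' z' s.2.2)
    with hR
  have hrnn : ∀ s, 0 ≤ R s := by
    intro s; rw [hR]; dsimp only
    split
    · exact le_rfl
    · exact div_nonneg (mul_nonneg (Finset.sum_nonneg fun z _ => hq _ z _)
        (Finset.sum_nonneg fun y _ => hq y _ _)) (hCnn _)
  have hdom : ∀ s : β × γ × α, R s = 0 → q s.1 s.2.1 s.2.2 = 0 := by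
    rintro ⟨y, z, x⟩ h0
    rw [hR] at h0; dsimp only at h0
    by_cases hC : (∑ y', ∑ z', q y' z' x) = 0
    · exact le_antisymm (le_trans (hA y z x) (hC ▸ hAC y x)) (hq y z x)
    · rw [if_neg hC, div_eq_zero_iff] at h0
      rcases h0 with h0 | h0
      · rcases mul_eq_zero.1 h0 with h1 | h1
        · exact le_antisymm (h1 ▸ hA y z x) (hq y z x)
        · exact le_antisymm (h1 ▸ hB y z x) (hq y z x)
      · exact absurd h0 hC
  -- marginal sums of R over (y, z) for fixed x equal those of q
  have hmargR : ∀ x, ∑ y, ∑ z, R (y, z, x) = ∑ y, ∑ z, q y z x := by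
    intro x
    by_cases hC : (∑ y', ∑ z', q y' z' x) = 0
    · simp only [hR, hC, if_true]
      simp [hC]
    · simp only [hR, if_neg hC]
      have hz : ∑ z, ∑ y', q y' z x = ∑ y', ∑ z', q y' z' x := Finset.sum_comm
      calc ∑ y, ∑ z, (∑ z', q y z' x) * (∑ y', q y' z x) / (∑ y', ∑ z', q y' z' x)
          = ∑ y, (∑ z', q y z' x) * (∑ z, ∑ y', q y' z x) / (∑ y', ∑ z', q y' z' x) := by
            refine Finset.sum_congr rfl fun y _ => ?_
            rw [← Finset.sum_div, ← Finset.mul_sum]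
        _ = ∑ y, ∑ z', q y z' x := by
            refine Finset.sum_congr rfl fun y _ => ?_
            rw [hz]
            field_simp
  have htripR : ∑ y, ∑ z, ∑ x, R (y, z, x) = ∑ y, ∑ z, ∑ x, q y z x := by
    calc ∑ y, ∑ z, ∑ x, R (y, z, x)
        = ∑ y, ∑ x, ∑ z, R (y, z, x) := Finset.sum_congr rfl fun y _ => Finset.sum_comm
      _ = ∑ x, ∑ y, ∑ z, R (y, z, x) := Finset.sum_comm
      _ = ∑ x, ∑ y, ∑ z, q y z x := Finset.sum_congr rfl fun x _ => hmargR x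
      _ = ∑ y, ∑ x, ∑ z, q y z x := Finset.sum_comm
      _ = ∑ y, ∑ z, ∑ x, q y z x := Finset.sum_congr rfl fun y _ => Finset.sum_comm
  have hgibbs := gibbs (fun s : β × γ × α => q s.1 s.2.1 s.2.2) R
    (fun s => hq _ _ _) hrnn hdom (le_of_eq (by
      simp only [Fintype.sum_prod_type]
      exact htripR))
  simp only [Fintype.sum_prod_type] at hgibbs
  have hlogR : ∀ y z x, q y z x * Real.log (R (y, z, x))
      = q y z x * (Real.log (∑ z', q y z' x) + Real.log (∑ y', q y' z x)
          - Real.log (∑ y', ∑ z', q y' z' x)) := by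
    intro y z x
    rcases eq_or_lt_of_le (hq y z x) with h0 | h0
    · rw [← h0]; ring
    · have hApos : 0 < ∑ z', q y z' x := lt_of_lt_of_le h0 (hA y z x)
      have hBpos : 0 < ∑ y', q y' z x := lt_of_lt_of_le h0 (hB y z x)
      have hCpos : 0 < ∑ y', ∑ z', q y' z' x := lt_of_lt_of_le hApos (hAC y x)
      have : R (y, z, x) = (∑ z', q y z' x) * (∑ y', q y' z x) / (∑ y', ∑ z', q y' z' x) := by
        rw [hR]; exact if_neg (ne_of_gt hCpos)
      rw [this, Real.log_div (by positivity) (ne_of_gt hCpos),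
        Real.log_mul (ne_of_gt hApos) (ne_of_gt hBpos)]
  have hcross : ∑ y, ∑ z, ∑ x, q y z x * Real.log (R (y, z, x))
      = ∑ y, ∑ x, (∑ z, q y z x) * Real.log (∑ z, q y z x)
        + ∑ z, ∑ x, (∑ y, q y z x) * Real.log (∑ y, q y z x)
        - ∑ x, (∑ y, ∑ z, q y z x) * Real.log (∑ y, ∑ z, q y z x) := by
    rw [show (∑ y, ∑ z, ∑ x, q y z x * Real.log (R (y, z, x)))
        = ∑ y, ∑ z, ∑ x, q y z x * (Real.log (∑ z', q y z' x) + Real.log (∑ y', q y' z x)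
          - Real.log (∑ y', ∑ z', q y' z' x)) from
      Finset.sum_congr rfl fun y _ => Finset.sum_congr rfl fun z _ =>
        Finset.sum_congr rfl fun x _ => hlogR y z x]
    exact cross q _ _ _
  linarith [hgibbs, hcross.symm.le, hcross.le]
end Abstract

end Aux

namespace MEL
section RV
variable {Ω : Type*} [Fintype Ω]
variable {α β γ : Type*} [Fintype α] [DecidableEq α] [Fintype β] [DecidableEq β]
  [Fintype γ] [DecidableEq γ]
open Finset

lemma probOf_nonneg (μ : Ω → ℝ) (hμ : ∀ ω, 0 ≤ μ ω) (X : Ω → α) (a : α) :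
    0 ≤ probOf μ X a :=
  Finset.sum_nonneg fun ω _ => by split <;> [exact hμ ω; exact le_rfl]

lemma marg_fst (μ : Ω → ℝ) (U : Ω → β) (V : Ω → α) (v : α) :
    ∑ u, probOf μ (fun ω => (U ω, V ω)) (u, v) = probOf μ V v := by
  unfold probOf
  rw [Finset.sum_comm]
  refine Finset.sum_congr rfl fun ω _ => ?_
  by_cases h1 : V ω = v
  · simp [Prod.ext_iff, h1]
  · simp [Prod.ext_iff, h1]

lemma marg_mid (μ : Ω → ℝ) (Y : Ω → β) (Z : Ω → γ) (X : Ω → α) (y : β) (x : α) :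
    ∑ z, probOf μ (fun ω => (Y ω, Z ω, X ω)) (y, z, x) =
      probOf μ (fun ω => (Y ω, X ω)) (y, x) := by
  unfold probOf
  rw [Finset.sum_comm]
  refine Finset.sum_congr rfl fun ω _ => ?_
  by_cases h1 : Y ω = y ∧ X ω = x
  · simp [Prod.ext_iff, h1.1, h1.2]
  · simp only [Prod.ext_iff] at *
    rw [if_neg h1]
    refine Finset.sum_eq_zero fun z _ => ?_
    rw [if_neg (by tauto)]

lemma marg_first3 (μ : Ω → ℝ) (Y : Ω → β) (Z : Ω → γ) (X : Ω → α) (z : γ) (x : α) :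
    ∑ y, probOf μ (fun ω => (Y ω, Z ω, X ω)) (y, z, x) =
      probOf μ (fun ω => (Z ω, X ω)) (z, x) := by
  unfold probOf
  rw [Finset.sum_comm]
  refine Finset.sum_congr rfl fun ω _ => ?_
  by_cases h1 : Z ω = z ∧ X ω = x
  · simp [Prod.ext_iff, h1.1, h1.2]
  · simp only [Prod.ext_iff] at *
    rw [if_neg (by tauto)]
    refine Finset.sum_eq_zero fun y _ => ?_
    rw [if_neg (by tauto)]

lemma entropy_equiv (μ : Ω → ℝ) (X : Ω → α) (e : α ≃ β) :
    entropy μ (fun ω => e (X ω)) = entropy μ X := by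
  unfold entropy
  congr 1
  rw [← Equiv.sum_comp e (fun b => probOf μ (fun ω => e (X ω)) b *
    Real.log (probOf μ (fun ω => e (X ω)) b))]
  refine Finset.sum_congr rfl fun a _ => ?_
  have : probOf μ (fun ω => e (X ω)) (e a) = probOf μ X a := by
    unfold probOf
    exact Finset.sum_congr rfl fun ω _ => by simp
  rw [this]

lemma entropy_triple_eq (μ : Ω → ℝ) (Y : Ω → β) (Z : Ω → γ) (X : Ω → α) :
    entropy μ (fun ω => (Y ω, Z ω, X ω)) =
      -∑ y, ∑ z, ∑ x, probOf μ (fun ω => (Y ω, Z ω, X ω)) (y, z, x) *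
        Real.log (probOf μ (fun ω => (Y ω, Z ω, X ω)) (y, z, x)) := by
  unfold entropy
  congr 1
  simp only [Fintype.sum_prod_type]

lemma entropy_pairYX_eq (μ : Ω → ℝ) (Y : Ω → β) (Z : Ω → γ) (X : Ω → α) :
    entropy μ (fun ω => (Y ω, X ω)) =
      -∑ y, ∑ x, (∑ z, probOf μ (fun ω => (Y ω, Z ω, X ω)) (y, z, x)) *
        Real.log (∑ z, probOf μ (fun ω => (Y ω, Z ω, X ω)) (y, z, x)) := by
  unfold entropy
  congr 1
  simp only [Fintype.sum_prod_type]
  exact Finset.sum_congr rfl fun y _ => Finset.sum_congr rfl fun x _ => by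
    rw [marg_mid μ Y Z X y x]

lemma entropy_pairZX_eq (μ : Ω → ℝ) (Y : Ω → β) (Z : Ω → γ) (X : Ω → α) :
    entropy μ (fun ω => (Z ω, X ω)) =
      -∑ z, ∑ x, (∑ y, probOf μ (fun ω => (Y ω, Z ω, X ω)) (y, z, x)) *
        Real.log (∑ y, probOf μ (fun ω => (Y ω, Z ω, X ω)) (y, z, x)) := by
  unfold entropy
  congr 1
  simp only [Fintype.sum_prod_type]
  exact Finset.sum_congr rfl fun z _ => Finset.sum_congr rfl fun x _ => by
    rw [marg_first3 μ Y Z X z x]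

lemma entropy_X_eq (μ : Ω → ℝ) (Y : Ω → β) (Z : Ω → γ) (X : Ω → α) :
    entropy μ X =
      -∑ x, (∑ y, ∑ z, probOf μ (fun ω => (Y ω, Z ω, X ω)) (y, z, x)) *
        Real.log (∑ y, ∑ z, probOf μ (fun ω => (Y ω, Z ω, X ω)) (y, z, x)) := by
  unfold entropy
  congr 1
  refine Finset.sum_congr rfl fun x _ => ?_
  have : ∑ y, ∑ z, probOf μ (fun ω => (Y ω, Z ω, X ω)) (y, z, x) = probOf μ X x := by
    rw [Finset.sum_congr rfl fun y (_ : y ∈ univ) => marg_mid μ Y Z X y x]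
    exact marg_fst μ Y X x
  rw [this]

lemma ssa_rv (μ : Ω → ℝ) (hμ : ∀ ω, 0 ≤ μ ω) (Y : Ω → β) (Z : Ω → γ) (X : Ω → α) :
    entropy μ (fun ω => (Y ω, Z ω, X ω)) + entropy μ X ≤
      entropy μ (fun ω => (Y ω, X ω)) + entropy μ (fun ω => (Z ω, X ω)) := by
  have h := ssa_abstract (fun y z x => probOf μ (fun ω => (Y ω, Z ω, X ω)) (y, z, x))
    (fun y z x => probOf_nonneg μ hμ _ _)
  rw [entropy_triple_eq μ Y Z X, entropy_pairYX_eq μ Y Z X, entropy_pairZX_eq μ Y Z X,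
    entropy_X_eq μ Y Z X]
  linarith


lemma ci_rv (μ : Ω → ℝ) (hμ : ∀ ω, 0 ≤ μ ω) (Y : Ω → β) (Z : Ω → γ) (X : Ω → α)
    (hci : condIndep μ Y Z X) :
    entropy μ (fun ω => (Y ω, Z ω, X ω)) + entropy μ X =
      entropy μ (fun ω => (Y ω, X ω)) + entropy μ (fun ω => (Z ω, X ω)) := by
  have h := ci_abstract (fun y z x => probOf μ (fun ω => (Y ω, Z ω, X ω)) (y, z, x))
    (fun y z x => probOf_nonneg μ hμ _ _) (by
      intro y z x
      have hx : ∑ y', ∑ z', probOf μ (fun ω => (Y ω, Z ω, X ω)) (y', z', x) = probOf μ X x := by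
        rw [Finset.sum_congr rfl fun y' (_ : y' ∈ univ) => marg_mid μ Y Z X y' x]
        exact marg_fst μ Y X x
      rw [hx, marg_mid μ Y Z X y x, marg_first3 μ Y Z X z x]
      exact hci x y z)
  rw [entropy_triple_eq μ Y Z X, entropy_pairYX_eq μ Y Z X, entropy_pairZX_eq μ Y Z X,
    entropy_X_eq μ Y Z X]
  linarith





def swap13 {A B C : Type*} : A × B × C ≃ C × B × A :=
  ⟨fun p => (p.2.2, p.2.1, p.1), fun p => (p.2.2, p.2.1, p.1), fun _ => rfl, fun _ => rfl⟩

def rot3 {A B C : Type*} : A × B × C ≃ B × C × A :=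
  ⟨fun p => (p.2.1, p.2.2, p.1), fun p => (p.2.2, p.1, p.2.1), fun _ => rfl, fun _ => rfl⟩

lemma mi_chain {δ ℋ : Type*} [Fintype δ] [DecidableEq δ] [Fintype ℋ] [DecidableEq ℋ]
    (μ : Ω → ℝ) (hμ : ∀ ω, 0 ≤ μ ω) (D : Ω → δ) (h₁ h₂ h₁₂ : Ω → ℋ)
    (hIndep : condIndep μ h₁ h₂ D)
    (hMarkov : condIndep μ h₁₂ D (fun ω => (h₁ ω, h₂ ω))) :
    mutualInfo μ D h₁₂ ≤ mutualInfo μ D h₁ + mutualInfo μ D h₂ - mutualInfo μ h₁ h₂ := by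
  have CI1 := ci_rv μ hμ h₁ h₂ D hIndep
  have CI2 := ci_rv μ hμ h₁₂ D (fun ω => (h₁ ω, h₂ ω)) hMarkov
  have SSA := ssa_rv μ hμ (fun ω => (h₁ ω, h₂ ω)) D h₁₂
  have E1 : entropy μ (fun ω => ((h₁ ω, h₂ ω), D ω, h₁₂ ω)) =
      entropy μ (fun ω => (h₁₂ ω, D ω, (h₁ ω, h₂ ω))) :=
    entropy_equiv μ (fun ω => (h₁₂ ω, D ω, (h₁ ω, h₂ ω))) swap13
  have E2 : entropy μ (fun ω => ((h₁ ω, h₂ ω), h₁₂ ω)) =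
      entropy μ (fun ω => (h₁₂ ω, (h₁ ω, h₂ ω))) :=
    entropy_equiv μ (fun ω => (h₁₂ ω, (h₁ ω, h₂ ω))) (Equiv.prodComm _ _)
  have E3 : entropy μ (fun ω => (D ω, (h₁ ω, h₂ ω))) =
      entropy μ (fun ω => (h₁ ω, h₂ ω, D ω)) :=
    entropy_equiv μ (fun ω => (h₁ ω, h₂ ω, D ω)) rot3.symm
  have E4 : entropy μ (fun ω => (h₁ ω, D ω)) = entropy μ (fun ω => (D ω, h₁ ω)) :=
    entropy_equiv μ (fun ω => (D ω, h₁ ω)) (Equiv.prodComm _ _)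
  have E5 : entropy μ (fun ω => (h₂ ω, D ω)) = entropy μ (fun ω => (D ω, h₂ ω)) :=
    entropy_equiv μ (fun ω => (D ω, h₂ ω)) (Equiv.prodComm _ _)
  beta_reduce at CI2
  unfold mutualInfo condEntropy
  linarith


end RV
end MEL

/-- Proposition 1 of the paper: for hypotheses `h₁`, `h₂`, `h₁₂` produced along the
Markov chain `D → (h₁, h₂) → h₁₂` with `h₁`, `h₂` conditionally independent given the
i.i.d. dataset `D`, a failover probability `p ∈ [0, 1]`, and a loss that is
`σ`-sub-Gaussian for every hypothesis (so that each model `h ∈ {h₁, h₂, h₁₂}` satisfies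
`E[(L(h) - L̂(h))²] ≤ (2σ²/n)·I(D;h)`), the overall generalization error
`gen²_overall = E[((1-p)/(1+p))(L(h₁₂)-L̂(h₁₂))² + (p/(1+p))(L(h₁)-L̂(h₁))²
+ (p/(1+p))(L(h₂)-L̂(h₂))²]` satisfies
`gen²_overall ≤ (1/(1+p))·(2σ²/n)·(I(D;h₁) + I(D;h₂) - (1-p)·I(h₁;h₂))`. -/
theorem gen_overall_sq_le
    {Ω 𝒵 ℋ : Type*} [Fintype Ω] [Fintype 𝒵] [DecidableEq 𝒵] [Fintype ℋ] [DecidableEq ℋ]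
    (μ : Ω → ℝ) (hμ : ∀ ω, 0 ≤ μ ω) (hμsum : ∑ ω, μ ω = 1)
    (P : 𝒵 → ℝ) (hP : ∀ z, 0 ≤ P z) (hPsum : ∑ z, P z = 1)
    (ℓ : ℋ → 𝒵 → ℝ) (hℓ : ∀ h' z, 0 ≤ ℓ h' z)
    (n : ℕ) (hn : 0 < n)
    (D : Ω → (Fin n → 𝒵)) (h₁ h₂ h₁₂ : Ω → ℋ)
    -- D is an i.i.d. sample of size n from P
    (hiid : ∀ d : Fin n → 𝒵, probOf μ D d = ∏ i, P (d i))
    -- h₁ and h₂ are conditionally independent given D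
    (hIndep : condIndep μ h₁ h₂ D)
    -- Markov chain D → (h₁, h₂) → h₁₂
    (hMarkov : condIndep μ h₁₂ D (fun ω => (h₁ ω, h₂ ω)))
    (σ : ℝ)
    -- ℓ(h', Z) is σ-sub-Gaussian for Z ∼ P, for every hypothesis h'
    (hsub : ∀ (h' : ℋ) (lam : ℝ),
      ∑ z, P z * Real.exp (lam * (ℓ h' z - popRisk P ℓ h')) ≤
        Real.exp (lam ^ 2 * σ ^ 2 / 2))
    -- so that each model h ∈ {h₁, h₂, h₁₂} satisfies E[(L(h) - L̂(h))²] ≤ (2σ²/n)·I(D;h)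
    (hbound₁ : ∑ ω, μ ω * (popRisk P ℓ (h₁ ω) - empRisk ℓ n (h₁ ω) (D ω)) ^ 2 ≤
      (2 * σ ^ 2 / n) * mutualInfo μ D h₁)
    (hbound₂ : ∑ ω, μ ω * (popRisk P ℓ (h₂ ω) - empRisk ℓ n (h₂ ω) (D ω)) ^ 2 ≤
      (2 * σ ^ 2 / n) * mutualInfo μ D h₂)
    (hbound₁₂ : ∑ ω, μ ω * (popRisk P ℓ (h₁₂ ω) - empRisk ℓ n (h₁₂ ω) (D ω)) ^ 2 ≤
      (2 * σ ^ 2 / n) * mutualInfo μ D h₁₂)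
    -- failover probability
    (p : ℝ) (hp0 : 0 ≤ p) (hp1 : p ≤ 1) :
    ∑ ω, μ ω *
        (((1 - p) / (1 + p)) * (popRisk P ℓ (h₁₂ ω) - empRisk ℓ n (h₁₂ ω) (D ω)) ^ 2
          + (p / (1 + p)) * (popRisk P ℓ (h₁ ω) - empRisk ℓ n (h₁ ω) (D ω)) ^ 2
          + (p / (1 + p)) * (popRisk P ℓ (h₂ ω) - empRisk ℓ n (h₂ ω) (D ω)) ^ 2) ≤
      (1 / (1 + p)) * (2 * σ ^ 2 / n) *
        (mutualInfo μ D h₁ + mutualInfo μ D h₂ - (1 - p) * mutualInfo μ h₁ h₂) := by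
    classical
  have h1p : (0:ℝ) < 1 + p := by linarith
  have hmi := mi_chain μ hμ D h₁ h₂ h₁₂ hIndep hMarkov
  have hK : (0:ℝ) ≤ 2 * σ ^ 2 / n := by positivity
  have hc1 : (0:ℝ) ≤ 1 - p := by linarith
  set E₁ := ∑ ω, μ ω * (popRisk P ℓ (h₁ ω) - empRisk ℓ n (h₁ ω) (D ω)) ^ 2 with hE₁
  set E₂ := ∑ ω, μ ω * (popRisk P ℓ (h₂ ω) - empRisk ℓ n (h₂ ω) (D ω)) ^ 2 with hE₂
  set E₁₂ := ∑ ω, μ ω * (popRisk P ℓ (h₁₂ ω) - empRisk ℓ n (h₁₂ ω) (D ω)) ^ 2 with hE₁₂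
  set K := 2 * σ ^ 2 / (n:ℝ) with hKdef
  set I₁ := mutualInfo μ D h₁
  set I₂ := mutualInfo μ D h₂
  set I₁₂ := mutualInfo μ D h₁₂
  set J := mutualInfo μ h₁ h₂
  have key : (1 - p) * E₁₂ + p * E₁ + p * E₂ ≤ K * (I₁ + I₂ - (1 - p) * J) := by
    have t₁ : (1 - p) * E₁₂ ≤ (1 - p) * (K * I₁₂) := by
      apply mul_le_mul_of_nonneg_left _ hc1
      exact hbound₁₂
    have t₁' : (1 - p) * (K * I₁₂) ≤ (1 - p) * (K * (I₁ + I₂ - J)) := by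
      apply mul_le_mul_of_nonneg_left _ hc1
      exact mul_le_mul_of_nonneg_left hmi hK
    have t₂ : p * E₁ ≤ p * (K * I₁) := mul_le_mul_of_nonneg_left hbound₁ hp0
    have t₃ : p * E₂ ≤ p * (K * I₂) := mul_le_mul_of_nonneg_left hbound₂ hp0
    calc (1 - p) * E₁₂ + p * E₁ + p * E₂
        ≤ (1 - p) * (K * (I₁ + I₂ - J)) + p * (K * I₁) + p * (K * I₂) := by linarith
      _ = K * (I₁ + I₂ - (1 - p) * J) := by ring
  have hsplit : ∑ ω, μ ω *
        (((1 - p) / (1 + p)) * (popRisk P ℓ (h₁₂ ω) - empRisk ℓ n (h₁₂ ω) (D ω)) ^ 2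
          + (p / (1 + p)) * (popRisk P ℓ (h₁ ω) - empRisk ℓ n (h₁ ω) (D ω)) ^ 2
          + (p / (1 + p)) * (popRisk P ℓ (h₂ ω) - empRisk ℓ n (h₂ ω) (D ω)) ^ 2)
      = ((1 - p) * E₁₂ + p * E₁ + p * E₂) / (1 + p) := by
    rw [hE₁, hE₂, hE₁₂, eq_div_iff (ne_of_gt h1p), Finset.sum_mul]
    simp only [Finset.mul_sum]
    rw [← Finset.sum_add_distrib, ← Finset.sum_add_distrib]
    refine Finset.sum_congr rfl fun ω _ => ?_
    field_simp
  rw [hsplit]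
  calc ((1 - p) * E₁₂ + p * E₁ + p * E₂) / (1 + p)
      ≤ (K * (I₁ + I₂ - (1 - p) * J)) / (1 + p) := by gcongr
    _ = 1 / (1 + p) * K * (I₁ + I₂ - (1 - p) * J) := by ring
end
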